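/- Let p ≥ 3 be prime, θ, α ∈ ℚ_p with |θ − 1|_p ≤ 1/p, |α|_p = 1, |1 − α|_p ≤ 1/p, and let λ be a weight with λ(0) = 1, λ(1) = α, |λ(i)|_p < 1 for i ≥ 2, |λ(i)|_p → 0, δ := max_{i≥2}|λ(i)|_p > 0. Then for all x, y ∈ B_δ one has ‖F⁺(x) − F⁺(y)‖ ≤ δ·|θ − 1|_p·‖x − y‖; in particular F⁺ is a strict contraction on B_δ when θ ≠ 1. -/

import Mathlib

open Filter IsUltrametricDist

/-! Writing `u_X = (α + 1)θ + X + s_X`, the `i`-th coordinate of `F⁺(x)` is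
`λ(i) (1 + 2(θ - 1)(x_i - 1) / u_X)`. Modulo the maximal ideal `u_X ≡ 4` and `s_X + s_Y ≡ 4`, so
both are units when `p ≠ 2`; hence `‖s_X - s_Y‖ = ‖D_X - D_Y‖ ≤ ‖X - Y‖`, and the ultrametric
inequality bounds `(x_i - 1)/u_X - (y_i - 1)/u_Y` by `max ‖x_i - y_i‖ ‖u_X - u_Y‖ ≤ ‖x - y‖`. -/

section Ultrametric

variable {E : Type*} [SeminormedAddCommGroup E] [IsUltrametricDist E]

lemma norm_sub_le_max (a b : E) : ‖a - b‖ ≤ max ‖a‖ ‖b‖ := by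
  simpa [sub_eq_add_neg] using norm_add_le_max a (-b)

lemma norm_add_lt_of_lt {a b : E} {r : ℝ} (ha : ‖a‖ < r) (hb : ‖b‖ < r) : ‖a + b‖ < r :=
  (norm_add_le_max a b).trans_lt (max_lt ha hb)

lemma summable_of_tendsto_norm_zero [CompleteSpace E] {f : ℕ → E}
    (hf : Tendsto (fun i => ‖f i‖) atTop (nhds 0)) : Summable f :=
  NonarchimedeanAddGroup.summable_of_tendsto_cofinite_zero <| by
    rwa [Nat.cofinite_eq_atTop, tendsto_zero_iff_norm_tendsto_zero]

lemma norm_tsum_sub_tsum_le_iSup [T2Space E] {f g : ℕ → E} (hf : Summable f) (hg : Summable g) :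
    ‖∑' j, f j - ∑' j, g j‖ ≤ ⨆ j, ‖f j - g j‖ :=
  hf.tsum_sub hg ▸ norm_tsum_le _

end Ultrametric

section NormedField

variable {K : Type*} [NormedField K]

lemma ne_zero_of_norm_eq_one {a : K} (h : ‖a‖ = 1) : a ≠ 0 :=
  norm_ne_zero_iff.mp (h ▸ one_ne_zero)

lemma norm_four_eq_one (h2 : ‖(2 : K)‖ = 1) : ‖(4 : K)‖ = 1 := by
  rw [show (4 : K) = 2 * 2 by norm_num, norm_mul, h2, one_mul]

variable [IsUltrametricDist K]

lemma norm_le_one_of_norm_sub_one_lt_one {a : K} (h : ‖a - 1‖ < 1) : ‖a‖ ≤ 1 := by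
  simpa using (norm_add_one_le_max_norm_one (a - 1)).trans (max_le h.le le_rfl)

lemma norm_eq_one_of_norm_sub_lt_one {a b : K} (hb : ‖b‖ = 1) (h : ‖a - b‖ < 1) : ‖a‖ = 1 := by
  rw [← sub_add_cancel a b, norm_add_eq_max_of_norm_ne_norm (by rw [hb]; exact h.ne), hb,
    max_eq_right h.le]

lemma norm_div_sub_div_le {a b u v : K} (hu : ‖u‖ = 1) (hv : ‖v‖ = 1) (hb : ‖b‖ ≤ 1) :
    ‖a / u - b / v‖ ≤ max ‖a - b‖ ‖u - v‖ := by
  have hu0 : u ≠ 0 := ne_zero_of_norm_eq_one hu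
  have hv0 : v ≠ 0 := ne_zero_of_norm_eq_one hv
  have key : a / u - b / v = ((a - b) * v + b * (v - u)) / (u * v) := by
    field_simp
    ring
  rw [key, norm_div, norm_mul u, hu, hv, mul_one, div_one]
  refine (norm_add_le_max _ _).trans (max_le_max ?_ ?_)
  · rw [norm_mul, hv, mul_one]
  · rw [norm_mul, norm_sub_rev]
    exact mul_le_of_le_one_left (norm_nonneg _) hb

lemma norm_sub_eq_norm_sq_sub_sq (h2 : ‖(2 : K)‖ = 1) {s t : K} (hs : ‖s - 2‖ < 1)
    (ht : ‖t - 2‖ < 1) : ‖s - t‖ = ‖s ^ 2 - t ^ 2‖ := by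
  have hst : ‖s + t‖ = 1 := by
    refine norm_eq_one_of_norm_sub_lt_one (norm_four_eq_one h2) ?_
    rw [show s + t - 4 = (s - 2) + (t - 2) by ring]
    exact norm_add_lt_of_lt hs ht
  rw [sq_sub_sq, norm_mul, hst, one_mul]

end NormedField

section Potts

variable {K : Type*}

section Field

variable [Field K]

def pottsDiscr (θ α Z : K) : K := (Z + θ * (1 - α)) ^ 2 + 4 * α * (Z + 1)

def pottsDenom (θ α Z s : K) : K := (α + 1) * θ + Z + s

/-- `(F⁺(x))_i = λ(i) * fPlusFactor θ α (x i) X s_X`. -/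
def fPlusFactor (θ α xi Z s : K) : K :=
  (2 * (θ - 1) * xi + (α - 1) * θ + Z + s + 2) / pottsDenom θ α Z s

lemma pottsDiscr_sub_pottsDiscr (θ α X Y : K) :
    pottsDiscr θ α X - pottsDiscr θ α Y = (X - Y) * (X + Y + 2 * θ * (1 - α) + 4 * α) := by
  unfold pottsDiscr
  ring

lemma fPlusFactor_eq {θ α x Z s : K} (hD : pottsDenom θ α Z s ≠ 0) :
    fPlusFactor θ α x Z s = 1 + 2 * (θ - 1) * ((x - 1) / pottsDenom θ α Z s) := by
  unfold fPlusFactor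
  field_simp
  unfold pottsDenom
  ring

end Field

variable [NormedField K] [IsUltrametricDist K] {θ α : K}

lemma norm_pottsDiscr_sub_le {X Y : K} (hθ : ‖θ‖ ≤ 1) (hα : ‖α‖ ≤ 1) (hX : ‖X‖ ≤ 1)
    (hY : ‖Y‖ ≤ 1) : ‖pottsDiscr θ α X - pottsDiscr θ α Y‖ ≤ ‖X - Y‖ := by
  have hadd : ∀ a b : K, ‖a‖ ≤ 1 → ‖b‖ ≤ 1 → ‖a + b‖ ≤ 1 := fun a b ha hb =>
    (norm_add_le_max a b).trans (max_le ha hb)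
  have hmul : ∀ a b : K, ‖a‖ ≤ 1 → ‖b‖ ≤ 1 → ‖a * b‖ ≤ 1 := fun a b ha hb =>
    (norm_mul_le a b).trans (mul_le_one₀ ha (norm_nonneg _) hb)
  have hnat : ∀ n : ℕ, ‖(n : K)‖ ≤ 1 := norm_natCast_le_one K
  have h1α : ‖1 - α‖ ≤ 1 := (norm_sub_le_max _ _).trans (max_le norm_one.le hα)
  rw [pottsDiscr_sub_pottsDiscr, norm_mul]
  refine mul_le_of_le_one_right (norm_nonneg _) ?_
  exact hadd _ _ (hadd _ _ (hadd _ _ hX hY) (hmul _ _ (hmul _ _ (by simpa using hnat 2) hθ) h1α))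
    (hmul _ _ (by simpa using hnat 4) hα)

lemma norm_pottsDenom_eq_one (h2 : ‖(2 : K)‖ = 1) {Z s : K} (hθ : ‖θ - 1‖ < 1)
    (hα : ‖α - 1‖ < 1) (hZ : ‖Z‖ < 1) (hs : ‖s - 2‖ < 1) : ‖pottsDenom θ α Z s‖ = 1 := by
  refine norm_eq_one_of_norm_sub_lt_one (norm_four_eq_one h2) ?_
  have hα1 : ‖α + 1‖ ≤ 1 :=
    (norm_add_one_le_max_norm_one α).trans (max_le (norm_le_one_of_norm_sub_one_lt_one hα) le_rfl)
  rw [show pottsDenom θ α Z s - 4 = (α + 1) * (θ - 1) + (α - 1) + Z + (s - 2) by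
    unfold pottsDenom; ring]
  refine norm_add_lt_of_lt (norm_add_lt_of_lt (norm_add_lt_of_lt ?_ hα) hZ) hs
  rw [norm_mul]
  exact (mul_le_of_le_one_left (norm_nonneg _) hα1).trans_lt hθ

theorem norm_fPlusFactor_sub_le (h2 : ‖(2 : K)‖ = 1) {x y X Y sX sY : K} (hθ : ‖θ - 1‖ < 1)
    (hα : ‖α - 1‖ < 1) (hX : ‖X‖ < 1) (hY : ‖Y‖ < 1) (hy : ‖y‖ ≤ 1)
    (hsX : sX ^ 2 = pottsDiscr θ α X) (hsX2 : ‖sX - 2‖ < 1)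
    (hsY : sY ^ 2 = pottsDiscr θ α Y) (hsY2 : ‖sY - 2‖ < 1) :
    ‖fPlusFactor θ α x X sX - fPlusFactor θ α y Y sY‖ ≤ ‖θ - 1‖ * max ‖x - y‖ ‖X - Y‖ := by
  have hDX := norm_pottsDenom_eq_one h2 hθ hα hX hsX2
  have hDY := norm_pottsDenom_eq_one h2 hθ hα hY hsY2
  have hs : ‖sX - sY‖ ≤ ‖X - Y‖ := by
    rw [norm_sub_eq_norm_sq_sub_sq h2 hsX2 hsY2, hsX, hsY]
    exact norm_pottsDiscr_sub_le (norm_le_one_of_norm_sub_one_lt_one hθ)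
      (norm_le_one_of_norm_sub_one_lt_one hα) hX.le hY.le
  have hden : ‖pottsDenom θ α X sX - pottsDenom θ α Y sY‖ ≤ ‖X - Y‖ := by
    rw [show pottsDenom θ α X sX - pottsDenom θ α Y sY = (X - Y) + (sX - sY) by
      unfold pottsDenom; ring]
    exact (norm_add_le_max _ _).trans (max_le le_rfl hs)
  have hy1 : ‖y - 1‖ ≤ 1 := (norm_sub_le_max _ _).trans (max_le hy norm_one.le)
  rw [fPlusFactor_eq (ne_zero_of_norm_eq_one hDX), fPlusFactor_eq (ne_zero_of_norm_eq_one hDY),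
    add_sub_add_left_eq_sub, ← mul_sub, norm_mul, norm_mul, h2, one_mul]
  gcongr
  calc _ ≤ max ‖(x - 1) - (y - 1)‖ ‖pottsDenom θ α X sX - pottsDenom θ α Y sY‖ :=
        norm_div_sub_div_le hDX hDY hy1
    _ ≤ max ‖x - y‖ ‖X - Y‖ := by
        rw [sub_sub_sub_cancel_right]
        exact max_le_max le_rfl hden

end Potts

theorem potts_Fplus_contraction_general (p : ℕ) [Fact p.Prime] (hp : 3 ≤ p)
    (θ α : ℚ_[p]) (hθ : ‖θ - 1‖ ≤ 1 / (p : ℝ))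
    (hα1 : ‖1 - α‖ ≤ 1 / (p : ℝ))
    (L : ℕ → ℚ_[p])
    (hLlt : ∀ i, 2 ≤ i → ‖L i‖ < 1)
    (δ : ℝ)
    (hδub : ∀ i, 2 ≤ i → ‖L i‖ ≤ δ) (hδmax : ∃ i, 2 ≤ i ∧ ‖L i‖ = δ)
    (x y : ℕ → ℚ_[p])
    (hxten : Tendsto (fun i => ‖x i‖) atTop (nhds 0))
    (hyten : Tendsto (fun i => ‖y i‖) atTop (nhds 0))
    (hxB : ∀ i, 2 ≤ i → ‖x i‖ ≤ δ) (hyB : ∀ i, 2 ≤ i → ‖y i‖ ≤ δ)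
    (X Y : ℚ_[p]) (hX : X = ∑' j : ℕ, x (j + 2)) (hY : Y = ∑' j : ℕ, y (j + 2))
    (sX sY : ℚ_[p])
    (hsX : sX ^ 2 = (X + θ * (1 - α)) ^ 2 + 4 * α * (X + 1)) (hsX2 : ‖sX - 2‖ < 1)
    (hsY : sY ^ 2 = (Y + θ * (1 - α)) ^ 2 + 4 * α * (Y + 1)) (hsY2 : ‖sY - 2‖ < 1) :
    ∀ i, 2 ≤ i →
      ‖L i * ((2 * (θ - 1) * x i + (α - 1) * θ + X + sX + 2) /
            ((α + 1) * θ + X + sX)) -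
        L i * ((2 * (θ - 1) * y i + (α - 1) * θ + Y + sY + 2) /
            ((α + 1) * θ + Y + sY))‖
        ≤ δ * ‖θ - 1‖ * ⨆ j : ℕ, ‖x (j + 2) - y (j + 2)‖ := by
  intro i hi
  obtain ⟨k, hk, hLk⟩ := hδmax
  have hδ0 : 0 ≤ δ := hLk ▸ norm_nonneg _
  have hδ1 : δ < 1 := hLk ▸ hLlt k hk
  have h2 : ‖(2 : ℚ_[p])‖ = 1 := by
    exact_mod_cast Padic.norm_natCast_eq_one_iff.mpr
      ((Nat.coprime_primes Fact.out Nat.prime_two).mpr (by omega))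
  have hp1 : 1 / (p : ℝ) < 1 := (div_lt_one (by positivity)).mpr (by exact_mod_cast (by omega))
  have hxs := (summable_nat_add_iff 2).mpr (summable_of_tendsto_norm_zero hxten)
  have hys := (summable_nat_add_iff 2).mpr (summable_of_tendsto_norm_zero hyten)
  have hXδ : ‖X‖ ≤ δ := hX ▸ norm_tsum_le_of_forall_le_of_nonneg hδ0 fun j => hxB _ (by omega)
  have hYδ : ‖Y‖ ≤ δ := hY ▸ norm_tsum_le_of_forall_le_of_nonneg hδ0 fun j => hyB _ (by omega)
  have hXY : ‖X - Y‖ ≤ ⨆ j : ℕ, ‖x (j + 2) - y (j + 2)‖ :=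
    hX ▸ hY ▸ norm_tsum_sub_tsum_le_iSup hxs hys
  have hxy : ‖x i - y i‖ ≤ ⨆ j : ℕ, ‖x (j + 2) - y (j + 2)‖ := by
    obtain ⟨j, rfl⟩ : ∃ j, i = j + 2 := ⟨i - 2, by omega⟩
    refine le_ciSup (f := fun j => ‖x (j + 2) - y (j + 2)‖) ⟨δ, ?_⟩ j
    rintro _ ⟨j, rfl⟩
    exact (norm_sub_le_max _ _).trans (max_le (hxB _ (by omega)) (hyB _ (by omega)))
  have hF := norm_fPlusFactor_sub_le (x := x i) h2 (hθ.trans_lt hp1)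
    (norm_sub_rev α 1 ▸ hα1.trans_lt hp1) (hXδ.trans_lt hδ1) (hYδ.trans_lt hδ1)
    ((hyB i hi).trans hδ1.le) hsX hsX2 hsY hsY2
  rw [← mul_sub, norm_mul, mul_assoc δ]
  exact mul_le_mul (hδub i hi) (hF.trans (by gcongr; exact max_le hxy hXY))
    (norm_nonneg _) hδ0

/-- Under the conditions `|θ-1|_p ≤ 1/p`, `|α|_p = 1`,
`|1-α|_p ≤ 1/p`, and with a weight `λ` satisfying `λ(0) = 1`, `λ(1) = α`,
`|λ(i)|_p < 1` for `i ≥ 2`, `|λ(i)|_p → 0`, `δ = max_{i≥2}|λ(i)|_p > 0`,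
one has `‖F⁺(x) - F⁺(y)‖ ≤ δ·|θ-1|_p·‖x - y‖` for all `x, y ∈ B_δ`
(sup-norm on sequences indexed by `i ≥ 2`), i.e. `F⁺` is a strict
contraction on `B_δ` when `θ ≠ 1`. -/
theorem potts_Fplus_contraction (p : ℕ) [Fact p.Prime] (hp : 3 ≤ p)
    (θ α : ℚ_[p]) (hθ : ‖θ - 1‖ ≤ 1 / (p : ℝ)) (hα : ‖α‖ = 1)
    (hα1 : ‖1 - α‖ ≤ 1 / (p : ℝ))
    (L : ℕ → ℚ_[p]) (hL0 : L 0 = 1) (hL1 : L 1 = α)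
    (hLlt : ∀ i, 2 ≤ i → ‖L i‖ < 1)
    (hLten : Tendsto (fun i => ‖L i‖) atTop (nhds 0))
    (δ : ℝ) (hδpos : 0 < δ)
    (hδub : ∀ i, 2 ≤ i → ‖L i‖ ≤ δ) (hδmax : ∃ i, 2 ≤ i ∧ ‖L i‖ = δ)
    (x y : ℕ → ℚ_[p])
    (hxten : Tendsto (fun i => ‖x i‖) atTop (nhds 0))
    (hyten : Tendsto (fun i => ‖y i‖) atTop (nhds 0))
    (hxB : ∀ i, 2 ≤ i → ‖x i‖ ≤ δ) (hyB : ∀ i, 2 ≤ i → ‖y i‖ ≤ δ)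
    (X Y : ℚ_[p]) (hX : X = ∑' j : ℕ, x (j + 2)) (hY : Y = ∑' j : ℕ, y (j + 2))
    (sX sY : ℚ_[p])
    (hsX : sX ^ 2 = (X + θ * (1 - α)) ^ 2 + 4 * α * (X + 1)) (hsX2 : ‖sX - 2‖ < 1)
    (hsY : sY ^ 2 = (Y + θ * (1 - α)) ^ 2 + 4 * α * (Y + 1)) (hsY2 : ‖sY - 2‖ < 1) :
    ∀ i, 2 ≤ i →
      ‖L i * ((2 * (θ - 1) * x i + (α - 1) * θ + X + sX + 2) /
            ((α + 1) * θ + X + sX)) -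
        L i * ((2 * (θ - 1) * y i + (α - 1) * θ + Y + sY + 2) /
            ((α + 1) * θ + Y + sY))‖
        ≤ δ * ‖θ - 1‖ * ⨆ j : ℕ, ‖x (j + 2) - y (j + 2)‖ :=
  potts_Fplus_contraction_general p hp θ α hθ hα1 L hLlt δ hδub hδmax x y hxten hyten hxB hyB X Y hX
    hY sX sY hsX hsX2 hsY hsY2
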